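/- arXiv:1902.06039 — 2 statements merged into one kernel-verified Lean document; each statement's English description precedes it below -/
import Mathlib

section
/- Let V be a finite set of 'unassigned' variables with a distinguished element c ∈ V, and let W be a finite set of 'ancestor' variables disjoint from V. For each v ∈ V ∪ W let D_v be a finite nonempty type, and fix an assignment σ_l ∈ D_l for each l ∈ W. For each j ∈ V, let AP(j) ⊆ V ∪ W and C(j) ⊆ V be finite sets of indices, let PP(j) ⊆ AP(j), and suppose a distinguished ancestor i ∈ W with a fixed value σ_i ∈ D_i. Suppose given nonnegative cost functions f_{jl} : D_j × D_l → ℝ for all relevant pairs, and a nonnegative function f_ic : D_i × D_c → ℝ. Then min over x ∈ ∏_{v ∈ V} D_v of [ Σ_{j ∈ V \ {c}} ( Σ_{l ∈ AP(j) ∩ W} f_{jl}(x_j, σ_l) + Σ_{l ∈ AP(j) ∩ V} f_{jl}(x_j, x_l) + Σ_{l ∈ C(j)} f_{jl}(x_j, x_l) ) + Σ_{l ∈ AP(c) ∩ W} f_{cl}(x_c, σ_l) + Σ_{l ∈ C(c)} f_{cl}(x_c, x_l) + f_ic(σ_i, x_c) ] ≥ Σ_{j ∈ V \ {c}} min_{x_j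 ∈ D_j} ( Σ_{l ∈ PP(j) ∩ W} f_{jl}(x_j, σ_l) ) + min_{x_c ∈ D_c} ( Σ_{l ∈ AP(c) ∩ W} f_{cl}(x_c, σ_l) ). -/
open Finset

lemma Finset.inf'_univ_sum_le_sum_of_subset {α ι : Type*} [Fintype α] [Nonempty α]
    {s t : Finset ι} (hst : s ⊆ t) {g : α → ι → ℝ} (hg : ∀ a l, 0 ≤ g a l) (a : α) :
    univ.inf' univ_nonempty (fun b => ∑ l ∈ s, g b l) ≤ ∑ l ∈ t, g a l :=
  (inf'_le _ (mem_univ a)).trans (sum_le_sum_of_subset_of_nonneg hst fun l _ _ => hg a l)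

theorem inference_lb_ge_asympt_fb_lb_general {I : Type*} [Fintype I] [DecidableEq I]
    (V W : Finset I)
    (c : I)
    (D : I → Type*) [∀ v, Fintype (D v)] [∀ v, Nonempty (D v)]
    (σ : ∀ l, D l)
    (AP C PP : I → Finset I)
    (hPP : ∀ j, PP j ⊆ AP j)
    (i : I)
    (f : ∀ j l, D j → D l → ℝ) (hf : ∀ j l xj xl, 0 ≤ f j l xj xl)
    (fic : D i → D c → ℝ) (hfic : ∀ xi xc, 0 ≤ fic xi xc) :
    Finset.univ.inf' Finset.univ_nonempty (fun x : ∀ v, D v =>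
        (∑ j ∈ V \ {c},
            ((∑ l ∈ AP j ∩ W, f j l (x j) (σ l))
              + (∑ l ∈ AP j ∩ V, f j l (x j) (x l))
              + (∑ l ∈ C j, f j l (x j) (x l))))
          + (∑ l ∈ AP c ∩ W, f c l (x c) (σ l))
          + (∑ l ∈ C c, f c l (x c) (x l))
          + fic (σ i) (x c))
      ≥ (∑ j ∈ V \ {c},
            Finset.univ.inf' Finset.univ_nonempty
              (fun xj : D j => ∑ l ∈ PP j ∩ W, f j l xj (σ l)))
          + Finset.univ.inf' Finset.univ_nonempty
              (fun xc : D c => ∑ l ∈ AP c ∩ W, f c l xc (σ l)) := by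
  refine le_inf' _ _ fun x _ => ?_
  have hlocal : ∀ j ∈ V \ {c},
      univ.inf' univ_nonempty (fun xj : D j => ∑ l ∈ PP j ∩ W, f j l xj (σ l))
        ≤ (∑ l ∈ AP j ∩ W, f j l (x j) (σ l))
          + (∑ l ∈ AP j ∩ V, f j l (x j) (x l))
          + (∑ l ∈ C j, f j l (x j) (x l)) := fun j _ =>
    calc _ ≤ ∑ l ∈ AP j ∩ W, f j l (x j) (σ l) :=
          inf'_univ_sum_le_sum_of_subset (inter_subset_inter_right (hPP j))
            (fun y l => hf j l y (σ l)) (x j)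
      _ ≤ _ := le_add_of_le_of_nonneg
          (le_add_of_nonneg_right (sum_nonneg fun l _ => hf j l _ _))
          (sum_nonneg fun l _ => hf j l _ _)
  have hroot : univ.inf' univ_nonempty (fun xc : D c => ∑ l ∈ AP c ∩ W, f c l xc (σ l))
      ≤ ∑ l ∈ AP c ∩ W, f c l (x c) (σ l) := inf'_le _ (mem_univ (x c))
  have hchildren : 0 ≤ ∑ l ∈ C c, f c l (x c) (x l) := sum_nonneg fun l _ => hf c l _ _
  linarith [sum_le_sum hlocal, hfic (σ i) (x c)]

/-- Property 4.1 of PT-ISABB: the initial lower bound computed by the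
non-local-elimination inference phase with unlimited dimension limit
(the left-hand minimization of the full aggregated one-sided subtree cost)
is at least as large as the AsymPT-FB lower bound (the right-hand sum of
independent per-variable minima of the best single-side local costs under
the current partial assignment `σ`).

Here `V` is the set consisting of agent `c` and its descendants, `W` is the
disjoint set of ancestors with fixed assignments `σ`, `AP j` are `j`'s parent
and pseudo parents, `PP j ⊆ AP j` are the pseudo parents, `C j` are `j`'s
children, and `i ∈ W` is `c`'s parent with parent-side function `fic`.
The minimization is over assignments `x` to the variables in `V` (the
objective only depends on the coordinates of `x` in `V`). -/
theorem inference_lb_ge_asympt_fb_lb {I : Type*} [Fintype I] [DecidableEq I]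
    (V W : Finset I) (hVW : Disjoint V W)
    (c : I) (hc : c ∈ V)
    (D : I → Type*) [∀ v, Fintype (D v)] [∀ v, Nonempty (D v)]
    (σ : ∀ l, D l)
    (AP C PP : I → Finset I)
    (hAP : ∀ j, AP j ⊆ V ∪ W) (hC : ∀ j, C j ⊆ V) (hPP : ∀ j, PP j ⊆ AP j)
    (i : I) (hi : i ∈ W)
    (f : ∀ j l, D j → D l → ℝ) (hf : ∀ j l xj xl, 0 ≤ f j l xj xl)
    (fic : D i → D c → ℝ) (hfic : ∀ xi xc, 0 ≤ fic xi xc) :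
    Finset.univ.inf' Finset.univ_nonempty (fun x : ∀ v, D v =>
        (∑ j ∈ V \ {c},
            ((∑ l ∈ AP j ∩ W, f j l (x j) (σ l))
              + (∑ l ∈ AP j ∩ V, f j l (x j) (x l))
              + (∑ l ∈ C j, f j l (x j) (x l))))
          + (∑ l ∈ AP c ∩ W, f c l (x c) (σ l))
          + (∑ l ∈ C c, f c l (x c) (x l))
          + fic (σ i) (x c))
      ≥ (∑ j ∈ V \ {c},
            Finset.univ.inf' Finset.univ_nonempty
              (fun xj : D j => ∑ l ∈ PP j ∩ W, f j l xj (σ l)))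
          + Finset.univ.inf' Finset.univ_nonempty
              (fun xc : D c => ∑ l ∈ AP c ∩ W, f c l xc (σ l)) :=
  inference_lb_ge_asympt_fb_lb_general V W c D σ AP C PP hPP i f hf fic hfic
end

section
/- Let V be a finite type of nodes equipped with a parent map p : V → Option V such that the relation 'u is the parent of v' is well-founded (so p determines a finite rooted forest, and the ancestor relation is the transitive closure of the parent relation). For each v ∈ V let D_v be a finite nonempty type; let AP(v) be a finite set of ancestors of v that contains the parent of v whenever it exists, and let C(v) = { c : p(c) = v } be the children of v. For each v and each u ∈ AP(v), let f_{vu} : D_v × D_u → ℝ and f_{uv} : D_u × D_v → ℝ be nonnegative cost functions. For an assignment y assigning y_w ∈ D_w to every node w, define recursively (by well-founded recursion on the forest): util_v(y) = Σ_{u ∈ AP(v)} f_{vu}(y_v, y_u) + Σ_{c ∈ C(v)} ChildUtil_v^c(y), where ChildUtil_v^c(y) = min_{x_c ∈ D_c} ( f_{vc}(y_v, x_c) + util_c(y[x_c/c]) ) and y[x_c/c] denotes y with the value at c replaced by x_c (note util_c depends only on the values of c, its subtree, and its ancestors). Also define the true two-sided subtree cost cost_c(y) = Σ_{j in the subtree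 rooted at c} Σ_{u ∈ AP(j)} ( f_{ju}(y_j, y_u) + f_{uj}(y_u, y_j) ). Then for every node v, every child c ∈ C(v), and every full assignment y, cost_c(y) ≥ ChildUtil_v^c(y). -/
/-!
Induct over the forest from the leaves up. Evaluating the minimum defining `ChildUtil v c` at
the actual value `y c` bounds it by `f v c (y v) (y c) + util c y`. The one-sided terms of
`util c`, together with `f v c`, are dominated by the two-sided cost at `c` because the parent
`v` lies in `AP c`, and each `ChildUtil c c'` is bounded by the cost of the subtree of `c'` by
induction. The subtrees of the children of `c` are disjoint and miss `c`, and all costs are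
nonnegative.
-/

open Finset Relation

theorem WellFounded.swap_of_finite {α : Type*} [Finite α] {r : α → α → Prop}
    (h : WellFounded r) : WellFounded (Function.swap r) :=
  haveI : IsTrans α (TransGen (Function.swap r)) := ⟨fun _ _ _ => TransGen.trans⟩
  haveI : Std.Irrefl (TransGen (Function.swap r)) :=
    ⟨fun a ha => h.transGen.irrefl.irrefl a (transGen_swap.mp ha)⟩
  Subrelation.wf TransGen.single (Finite.wellFounded_of_trans_of_irrefl _)

namespace ParentMap

open scoped Classical

variable {V : Type*} (p : V → Option V)

theorem not_transGen_self (hwf : WellFounded (fun u v => p v = some u)) (c : V) :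
    ¬ TransGen (fun a b => p a = some b) c c := fun h =>
  hwf.transGen.irrefl.irrefl c (transGen_swap.mpr h)

theorem eq_of_reflTransGen_of_parent_eq (hwf : WellFounded (fun u v => p v = some u))
    {c c₁ c₂ : V} (h₁ : p c₁ = some c) (h₂ : p c₂ = some c)
    (h : ReflTransGen (fun a b => p a = some b) c₁ c₂) : c₁ = c₂ := by
  rcases h.cases_head with rfl | ⟨d, hd, hdc₂⟩
  · rfl
  · obtain rfl : d = c := Option.some.inj (hd.symm.trans h₁)
    exact (not_transGen_self p hwf d (TransGen.tail' hdc₂ h₂)).elim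

variable [Fintype V]

noncomputable def subtree (c : V) : Finset V :=
  univ.filter (fun j => ReflTransGen (fun a b => p a = some b) j c)

@[simp]
theorem mem_subtree {c j : V} :
    j ∈ subtree p c ↔ ReflTransGen (fun a b => p a = some b) j c := by
  simp [subtree]

theorem self_mem_subtree (c : V) : c ∈ subtree p c :=
  (mem_subtree p).mpr ReflTransGen.refl

theorem disjoint_subtree_of_parent_eq (hwf : WellFounded (fun u v => p v = some u))
    {c c₁ c₂ : V} (h₁ : p c₁ = some c) (h₂ : p c₂ = some c) (hne : c₁ ≠ c₂) :
    Disjoint (subtree p c₁) (subtree p c₂) := by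
  refine disjoint_left.mpr fun j hj₁ hj₂ => hne ?_
  rw [mem_subtree] at hj₁ hj₂
  rcases hj₁.total_of_right_unique (fun _ _ _ h h' => Option.some.inj (h.symm.trans h')) hj₂
    with h | h
  · exact eq_of_reflTransGen_of_parent_eq p hwf h₁ h₂ h
  · exact (eq_of_reflTransGen_of_parent_eq p hwf h₂ h₁ h).symm

variable [DecidableEq V]

theorem subtree_subset_erase_of_parent (hwf : WellFounded (fun u v => p v = some u))
    {c c' : V} (h : p c' = some c) : subtree p c' ⊆ (subtree p c).erase c := by
  intro j hj
  rw [mem_subtree] at hj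
  refine mem_erase.mpr ⟨?_, (mem_subtree p).mpr (hj.tail h)⟩
  rintro rfl
  exact not_transGen_self p hwf j (TransGen.tail' hj h)

theorem sum_sum_subtree_children_le {M : Type*} [AddCommMonoid M] [PartialOrder M]
    [IsOrderedAddMonoid M] (hwf : WellFounded (fun u v => p v = some u)) (g : V → M)
    (hg : ∀ j, 0 ≤ g j) (c : V) :
    ∑ c' ∈ univ.filter (fun c' => p c' = some c), ∑ j ∈ subtree p c', g j
      ≤ ∑ j ∈ (subtree p c).erase c, g j := by
  have hchild : ∀ c' ∈ univ.filter (fun c' => p c' = some c), p c' = some c := fun c' hc' =>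
    (mem_filter.mp hc').2
  rw [← sum_biUnion fun c₁ h₁ c₂ h₂ hne =>
    disjoint_subtree_of_parent_eq p hwf (hchild c₁ h₁) (hchild c₂ h₂) hne]
  refine sum_le_sum_of_subset_of_nonneg ?_ fun j _ _ => hg j
  exact biUnion_subset.mpr fun c' hc' => subtree_subset_erase_of_parent p hwf (hchild c' hc')

end ParentMap

section Inference

variable {V : Type*} {p : V → Option V} {D : V → Type*} {AP : V → Finset V}
  {f : ∀ v u, D v → D u → ℝ} {util : ∀ _ : V, (∀ w, D w) → ℝ}
  {ChildUtil : V → V → (∀ w, D w) → ℝ}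

def twoSidedCost (AP : V → Finset V) (f : ∀ v u, D v → D u → ℝ) (y : ∀ w, D w) (j : V) :
    ℝ :=
  ∑ u ∈ AP j, (f j u (y j) (y u) + f u j (y u) (y j))

theorem twoSidedCost_nonneg (hf : ∀ v u xv xu, 0 ≤ f v u xv xu) (y : ∀ w, D w) (j : V) :
    0 ≤ twoSidedCost AP f y j :=
  sum_nonneg fun _ _ => add_nonneg (hf ..) (hf ..)

theorem add_sum_le_twoSidedCost (hf : ∀ v u xv xu, 0 ≤ f v u xv xu) {v c : V} (hvc : v ∈ AP c)
    (y : ∀ w, D w) :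
    f v c (y v) (y c) + ∑ u ∈ AP c, f c u (y c) (y u) ≤ twoSidedCost AP f y c := by
  rw [twoSidedCost, sum_add_distrib, add_comm]
  gcongr
  exact single_le_sum (f := fun u => f u c (y u) (y c)) (fun u _ => hf ..) hvc

variable [DecidableEq V] [∀ v, Fintype (D v)] [∀ v, Nonempty (D v)]

theorem childUtil_le_add_util
    (hchild : ∀ v c y, ChildUtil v c y
        = univ.inf' univ_nonempty
            (fun xc : D c => f v c (y v) xc + util c (Function.update y c xc)))
    (v c : V) (y : ∀ w, D w) :
    ChildUtil v c y ≤ f v c (y v) (y c) + util c y := by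
  simpa only [hchild, Function.update_eq_self] using
    inf'_le (fun xc : D c => f v c (y v) xc + util c (Function.update y c xc)) (mem_univ (y c))

variable [Fintype V]

theorem childUtil_le_sum_subtree_twoSidedCost
    (hwf : WellFounded (fun u v => p v = some u))
    (hAPparent : ∀ v u, p v = some u → u ∈ AP v)
    (hf : ∀ v u xv xu, 0 ≤ f v u xv xu)
    (hutil : ∀ v y, util v y
        = (∑ u ∈ AP v, f v u (y v) (y u))
          + ∑ c ∈ univ.filter (fun c => p c = some v), ChildUtil v c y)
    (hchild : ∀ v c y, ChildUtil v c y
        = univ.inf' univ_nonempty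
            (fun xc : D c => f v c (y v) xc + util c (Function.update y c xc)))
    (c : V) {v : V} (hcv : p c = some v) (y : ∀ w, D w) :
    ChildUtil v c y ≤ ∑ j ∈ ParentMap.subtree p c, twoSidedCost AP f y j := by
  induction c using hwf.swap_of_finite.induction generalizing v with
  | _ c ih =>
    calc ChildUtil v c y ≤ f v c (y v) (y c) + util c y := childUtil_le_add_util hchild v c y
      _ = (f v c (y v) (y c) + ∑ u ∈ AP c, f c u (y c) (y u))
            + ∑ c' ∈ univ.filter (fun c' => p c' = some c), ChildUtil c c' y := by
          rw [hutil, add_assoc]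
      _ ≤ twoSidedCost AP f y c + ∑ c' ∈ univ.filter (fun c' => p c' = some c),
            ∑ j ∈ ParentMap.subtree p c', twoSidedCost AP f y j := by
          gcongr with c' hc'
          · exact add_sum_le_twoSidedCost hf (hAPparent c v hcv) y
          · exact ih c' (mem_filter.mp hc').2 (mem_filter.mp hc').2
      _ ≤ twoSidedCost AP f y c
            + ∑ j ∈ (ParentMap.subtree p c).erase c, twoSidedCost AP f y j := by
          gcongr
          exact ParentMap.sum_sum_subtree_children_le p hwf _ (twoSidedCost_nonneg hf y) c
      _ = ∑ j ∈ ParentMap.subtree p c, twoSidedCost AP f y j :=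
          add_sum_erase _ _ (ParentMap.self_mem_subtree p c)

end Inference

open scoped Classical in
theorem childutil_le_subtree_cost_general {V : Type*} [Fintype V] [DecidableEq V]
    (p : V → Option V)
    (hwf : WellFounded (fun u v => p v = some u))
    (D : V → Type*) [∀ v, Fintype (D v)] [∀ v, Nonempty (D v)]
    (AP : V → Finset V)
    (hAPparent : ∀ v u, p v = some u → u ∈ AP v)
    (f : ∀ v u, D v → D u → ℝ) (hf : ∀ v u xv xu, 0 ≤ f v u xv xu)
    (util : ∀ _ : V, (∀ w, D w) → ℝ)
    (ChildUtil : V → V → (∀ w, D w) → ℝ)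
    (hutil : ∀ v y, util v y
        = (∑ u ∈ AP v, f v u (y v) (y u))
          + ∑ c ∈ Finset.univ.filter (fun c => p c = some v), ChildUtil v c y)
    (hchild : ∀ v c y, ChildUtil v c y
        = Finset.univ.inf' Finset.univ_nonempty
            (fun xc : D c => f v c (y v) xc + util c (Function.update y c xc))) :
    ∀ (v c : V), p c = some v → ∀ y : ∀ w, D w,
      (∑ j ∈ Finset.univ.filter
            (fun j => Relation.ReflTransGen (fun a b => p a = some b) j c),
          ∑ u ∈ AP j, (f j u (y j) (y u) + f u j (y u) (y j)))
        ≥ ChildUtil v c y := by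
  intro v c hcv y
  exact childUtil_le_sum_subtree_twoSidedCost hwf hAPparent hf hutil hchild c hcv y

open scoped Classical in
/-- General tree-recursive form of Lemma 4.2 (PT-ISABB, inference phase with
`k = ∞`): on a finite rooted forest given by a parent map `p` (with
well-founded parent relation), where each agent `v` is constrained with a set
`AP v` of its ancestors (containing its parent) through nonnegative one-sided
cost functions `f`, the bottom-up one-sided utility `util` (with non-local
elimination of each child `c` by its parent `v`, producing `ChildUtil v c`)
yields, for every child `c` of `v` and every full assignment `y`, a lower
bound `ChildUtil v c y` on the true two-sided cost of the subtree rooted at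
`c`. -/
theorem childutil_le_subtree_cost {V : Type*} [Fintype V] [DecidableEq V]
    (p : V → Option V)
    (hwf : WellFounded (fun u v => p v = some u))
    (D : V → Type*) [∀ v, Fintype (D v)] [∀ v, Nonempty (D v)]
    (AP : V → Finset V)
    (hAPanc : ∀ v, ∀ u ∈ AP v, Relation.TransGen (fun a b => p a = some b) v u)
    (hAPparent : ∀ v u, p v = some u → u ∈ AP v)
    (f : ∀ v u, D v → D u → ℝ) (hf : ∀ v u xv xu, 0 ≤ f v u xv xu)
    (util : ∀ _ : V, (∀ w, D w) → ℝ)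
    (ChildUtil : V → V → (∀ w, D w) → ℝ)
    (hutil : ∀ v y, util v y
        = (∑ u ∈ AP v, f v u (y v) (y u))
          + ∑ c ∈ Finset.univ.filter (fun c => p c = some v), ChildUtil v c y)
    (hchild : ∀ v c y, ChildUtil v c y
        = Finset.univ.inf' Finset.univ_nonempty
            (fun xc : D c => f v c (y v) xc + util c (Function.update y c xc))) :
    ∀ (v c : V), p c = some v → ∀ y : ∀ w, D w,
      (∑ j ∈ Finset.univ.filter
            (fun j => Relation.ReflTransGen (fun a b => p a = some b) j c),
          ∑ u ∈ AP j, (f j u (y j) (y u) + f u j (y u) (y j)))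
        ≥ ChildUtil v c y :=
  childutil_le_subtree_cost_general p hwf D AP hAPparent f hf util ChildUtil hutil hchild
end
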